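/- Unambiguity of the WPDA deduction system: any balanced path from an entering state in M has a unique proof (tree with side conditions) in L_M. -/

import Mathlib

/- A WPDA ⟨Σ, Π, Π̂, Q, E, s, f⟩ over a semiring K.  `A` is the input alphabet Σ,
`P` the alphabet of opening parentheses Π (a closing parenthesis `â ∈ Π̂` is
represented as `(true, a)`, an opening one as `(false, a)`), `Q` the states, and `T`
the set of transitions `E`, with source `src e`, label `lab e` (`none` = ε,
`some (.inl x)` = input symbol, `some (.inr (false, a))` = opening parenthesis,
`some (.inr (true, a))` = closing parenthesis), weight `wt e`, target `dst e`. -/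

/-- Paths: sequences of composable transitions. -/
inductive IsPath {Q T : Type*} (src dst : T → Q) : Q → List T → Q → Prop
  | nil (q : Q) : IsPath src dst q [] q
  | cons {q r : Q} {e : T} {es : List T} (h : src e = q)
      (hp : IsPath src dst (dst e) es r) : IsPath src dst q (e :: es) r

/-- The parenthesis written on a label, if any. -/
def parenOf {A P : Type*} : Option (A ⊕ (Bool × P)) → Option (Bool × P)
  | some (Sum.inr x) => some x
  | _ => none

/-- The subsequence of the label string of a path consisting of its parentheses. -/
def parens {A P T : Type*} (lab : T → Option (A ⊕ (Bool × P))) (π : List T) :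
    List (Bool × P) :=
  π.filterMap (fun e => parenOf (lab e))

/-- The Dyck language on Π, Π̂. -/
inductive Dyck {P : Type*} : List (Bool × P) → Prop
  | nil : Dyck []
  | wrap {u : List (Bool × P)} (a : P) (h : Dyck u) :
      Dyck ((false, a) :: u ++ [(true, a)])
  | append {u v : List (Bool × P)} (hu : Dyck u) (hv : Dyck v) : Dyck (u ++ v)

/-- A path is balanced if its parenthesis subsequence is a Dyck word. -/
def BalancedP {A P T : Type*} (lab : T → Option (A ⊕ (Bool × P))) (π : List T) : Prop :=
  Dyck (parens lab π)

/-- The weight of a path: the ⊗-product of its transition weights, in order. -/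
def pweight {T K : Type*} [Semiring K] (wt : T → K) (π : List T) : K :=
  (π.map wt).prod

/-- Entering states: the start state `s`, and targets of opening-parenthesis
transitions. -/
def Entering {Q T A P : Type*} (dst : T → Q) (lab : T → Option (A ⊕ (Bool × P)))
    (s : Q) (q : Q) : Prop :=
  q = s ∨ ∃ (e : T) (a : P), dst e = q ∧ lab e = some (Sum.inr (false, a))

/-- Proofs in the weighted deductive logic L_M describing the execution of the WPDA:
axioms `q ⤳ q : 1̄` at entering states, the Scan rule, and the Complete rule. -/
inductive Pf {Q T A P K : Type*} [Semiring K] (src dst : T → Q)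
    (lab : T → Option (A ⊕ (Bool × P))) (wt : T → K) (s : Q) : Q → Q → K → Type _
  | ax (q : Q) (h : Entering dst lab s q) : Pf src dst lab wt s q q 1
  | scan {q r : Q} {u : K} (pf : Pf src dst lab wt s q r u) (e : T)
      (hsrc : src e = r) (hlab : ∀ x : Bool × P, lab e ≠ some (Sum.inr x)) :
      Pf src dst lab wt s q (dst e) (u * wt e)
  | complete {q r r' : Q} {u₁ u₂ : K} (a : P)
      (pf₁ : Pf src dst lab wt s q r u₁) (e₁ : T)
      (h₁s : src e₁ = r) (h₁ : lab e₁ = some (Sum.inr (false, a)))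
      (pf₂ : Pf src dst lab wt s (dst e₁) r' u₂) (e₂ : T)
      (h₂s : src e₂ = r') (h₂ : lab e₂ = some (Sum.inr (true, a))) :
      Pf src dst lab wt s q (dst e₂) (u₁ * wt e₁ * u₂ * wt e₂)

/-- The path induced by a proof: the transitions appearing in side conditions, read in
left-to-right post-order. -/
def inducedPath {Q T A P K : Type*} [Semiring K] {src dst : T → Q}
    {lab : T → Option (A ⊕ (Bool × P))} {wt : T → K} {s : Q} :
    ∀ {q₁ q₂ : Q} {u : K}, Pf src dst lab wt s q₁ q₂ u → List T
  | _, _, _, .ax _ _ => []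
  | _, _, _, .scan pf e _ _ => inducedPath pf ++ [e]
  | _, _, _, .complete _ pf₁ e₁ _ _ pf₂ e₂ _ _ =>
      inducedPath pf₁ ++ e₁ :: (inducedPath pf₂ ++ [e₂])

section Aux

variable {Q T A P K : Type*} [Semiring K] (src dst : T → Q)
    (lab : T → Option (A ⊕ (Bool × P))) (wt : T → K) (s : Q)

/-- Balance of a parenthesis word: #closing − #opening. -/
def bal {P : Type*} (w : List (Bool × P)) : ℤ :=
  (w.map fun x => if x.1 then (1 : ℤ) else -1).sum

lemma bal_append {P : Type*} (u v : List (Bool × P)) : bal (u ++ v) = bal u + bal v := by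
  simp [bal]

lemma Dyck.bal_eq_zero {P : Type*} {w : List (Bool × P)} (h : Dyck w) : bal w = 0 := by
  induction h with
  | nil => rfl
  | @wrap u a h ih =>
      simp only [bal] at ih
      simp [bal, ih]
  | @append u v hu hv ihu ihv => simp [bal_append, ihu, ihv]

lemma Dyck.bal_suffix {P : Type*} {w : List (Bool × P)} (h : Dyck w) :
    ∀ x y : List (Bool × P), w = x ++ y → 0 ≤ bal y := by
  induction h with
  | nil =>
      intro x y hxy
      obtain ⟨-, rfl⟩ := List.append_eq_nil_iff.mp hxy.symm
      simp [bal]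
  | @wrap u a h ih =>
      intro x y hxy
      cases x with
      | nil =>
          simp only [List.nil_append] at hxy
          rw [← hxy, (Dyck.wrap a h).bal_eq_zero]
      | cons b x' =>
          simp only [List.cons_append, List.cons.injEq] at hxy
          obtain ⟨rfl, hxy⟩ := hxy
          rcases List.append_eq_append_iff.mp hxy with ⟨a', ha1, ha2⟩ | ⟨c', hc1, hc2⟩
          · rcases List.cons_eq_append_iff.mp ha2 with ⟨rfl, rfl⟩ | ⟨a'', rfl, h3⟩
            · simp [bal]
            · obtain ⟨-, rfl⟩ := List.append_eq_nil_iff.mp h3.symm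
              simp [bal]
          · have hb := ih x' c' hc1
            subst hc2
            rw [bal_append]
            have h1 : bal [((true : Bool), a)] = 1 := by simp [bal]
            omega
  | @append u v hu hv ihu ihv =>
      intro x y hxy
      rcases List.append_eq_append_iff.mp hxy.symm with ⟨a', ha1, ha2⟩ | ⟨c', hc1, hc2⟩
      · have hb := ihu x a' ha1
        have h0 := hv.bal_eq_zero
        subst ha2
        rw [bal_append]
        omega
      · exact ihv c' y hc2

lemma parens_append {A P T : Type*} (lab : T → Option (A ⊕ (Bool × P))) (u v : List T) :
    parens lab (u ++ v) = parens lab u ++ parens lab v :=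
  List.filterMap_append

/-- Uniqueness of the decomposition used in the Complete rule. -/
lemma split_unique {u₁ u₂ v₁ v₂ : List T} {e₁ e₂ : T} {a₁ a₂ : P}
    (h : u₁ ++ e₁ :: v₁ = u₂ ++ e₂ :: v₂)
    (h₁ : lab e₁ = some (Sum.inr (false, a₁))) (h₂ : lab e₂ = some (Sum.inr (false, a₂)))
    (d₁ : Dyck (parens lab v₁)) (d₂ : Dyck (parens lab v₂)) :
    u₁ = u₂ ∧ e₁ = e₂ ∧ v₁ = v₂ := by
  rcases List.append_eq_append_iff.mp h with ⟨a', ha1, ha2⟩ | ⟨c', hc1, hc2⟩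
  · rcases List.cons_eq_append_iff.mp ha2 with ⟨rfl, h'⟩ | ⟨a'', rfl, h'⟩
    · injection h'.symm with hh1 hh2
      exact ⟨(by simpa using ha1 : u₂ = u₁).symm, hh1, hh2⟩
    · exfalso
      subst h'
      have hsuf := d₁.bal_suffix (parens lab a'') ((false, a₂) :: parens lab v₂)
        (by simp [parens, parenOf, h₂])
      have h0 := d₂.bal_eq_zero
      have hc : bal ((false, a₂) :: parens lab v₂) = -1 + bal (parens lab v₂) := by
        simp [bal]
      omega
  · rcases List.cons_eq_append_iff.mp hc2 with ⟨rfl, h'⟩ | ⟨c'', rfl, h'⟩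
    · injection h'.symm with hh1 hh2
      exact ⟨by simpa using hc1, hh1.symm, hh2.symm⟩
    · exfalso
      subst h'
      have hsuf := d₂.bal_suffix (parens lab c'') ((false, a₁) :: parens lab v₁)
        (by simp [parens, parenOf, h₁])
      have h0 := d₁.bal_eq_zero
      have hc : bal ((false, a₁) :: parens lab v₁) = -1 + bal (parens lab v₁) := by
        simp [bal]
      omega

lemma dyck_inducedPath : ∀ {q q' : Q} {u : K} (p : Pf src dst lab wt s q q' u),
    Dyck (parens lab (inducedPath p)) := by
  intro q q' u p
  induction p with
  | ax q h => exact Dyck.nil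
  | scan pf e hsrc hlab ih =>
      have he : parenOf (lab e) = none := by
        cases hl : lab e with
        | none => rfl
        | some x =>
            cases x with
            | inl _ => rfl
            | inr y => exact absurd hl (hlab y)
      simpa [inducedPath, parens_append, parens, he] using ih
  | complete a pf₁ e₁ h₁s h₁ pf₂ e₂ h₂s h₂ ih₁ ih₂ =>
      have : parens lab (inducedPath (Pf.complete a pf₁ e₁ h₁s h₁ pf₂ e₂ h₂s h₂)) =
          parens lab (inducedPath pf₁) ++
            ((false, a) :: (parens lab (inducedPath pf₂) ++ [(true, a)])) := by
        simp [inducedPath, parens_append, parens, h₁, h₂, parenOf]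
      rw [this]
      exact Dyck.append ih₁ (Dyck.wrap a ih₂)

theorem pf_unique : ∀ {q q' q'' : Q} {u v : K}
    (p : Pf src dst lab wt s q q' u) (p' : Pf src dst lab wt s q q'' v),
    q' = q'' → inducedPath p = inducedPath p' → u = v ∧ HEq p p' := by
  intro q q' q'' u v p p' hq hpath
  induction p generalizing q'' v with
  | ax q h =>
      cases p' with
      | ax q'' h' =>
          cases hq
          exact ⟨rfl, HEq.rfl⟩
      | scan pf' e' hsrc' hlab' =>
          exact absurd hpath.symm (by simp [inducedPath])
      | complete a' pf₁' e₁' h₁s' h₁' pf₂' e₂' h₂s' h₂' =>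
          exact absurd hpath.symm (by simp [inducedPath])
  | scan pf e hsrc hlab ih =>
      cases p' with
      | ax q'' h' => exact absurd hpath (by simp [inducedPath])
      | scan pf' e' hsrc' hlab' =>
          obtain ⟨hp, he⟩ := List.append_inj' hpath rfl
          obtain rfl : e = e' := by simpa using he
          have hr := hsrc.symm.trans hsrc'
          subst hr
          obtain ⟨rfl, hpf⟩ := ih pf' rfl hp
          cases hpf
          exact ⟨rfl, HEq.rfl⟩
      | complete a' pf₁' e₁' h₁s' h₁' pf₂' e₂' h₂s' h₂' =>
          have h2 : inducedPath pf ++ [e] =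
              (inducedPath pf₁' ++ e₁' :: inducedPath pf₂') ++ [e₂'] := by
            simpa [inducedPath, List.append_assoc] using hpath
          obtain ⟨-, he⟩ := List.append_inj' h2 rfl
          obtain rfl : e = e₂' := by simpa using he
          exact absurd h₂' (hlab _)
  | complete a pf₁ e₁ h₁s h₁ pf₂ e₂ h₂s h₂ ih₁ ih₂ =>
      cases p' with
      | ax q'' h' => exact absurd hpath (by simp [inducedPath])
      | scan pf' e' hsrc' hlab' =>
          have h2 : (inducedPath pf₁ ++ e₁ :: inducedPath pf₂) ++ [e₂] =
              inducedPath pf' ++ [e'] := by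
            simpa [inducedPath, List.append_assoc] using hpath
          obtain ⟨-, he⟩ := List.append_inj' h2 rfl
          obtain rfl : e₂ = e' := by simpa using he
          exact absurd h₂ (hlab' _)
      | complete a' pf₁' e₁' h₁s' h₁' pf₂' e₂' h₂s' h₂' =>
          have h2 : (inducedPath pf₁ ++ e₁ :: inducedPath pf₂) ++ [e₂] =
              (inducedPath pf₁' ++ e₁' :: inducedPath pf₂') ++ [e₂'] := by
            simpa [inducedPath, List.append_assoc] using hpath
          obtain ⟨h3, he⟩ := List.append_inj' h2 rfl
          obtain rfl : e₂ = e₂' := by simpa using he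
          obtain rfl : a = a' := by
            have := h₂.symm.trans h₂'
            simpa using this
          obtain ⟨h4, rfl, h5⟩ := split_unique lab h3 h₁ h₁'
            (dyck_inducedPath src dst lab wt s pf₂)
            (dyck_inducedPath src dst lab wt s pf₂')
          have hr := h₁s.symm.trans h₁s'
          subst hr
          obtain ⟨rfl, hpf₁⟩ := ih₁ pf₁' rfl h4
          cases hpf₁
          have hr2 := h₂s.symm.trans h₂s'
          subst hr2
          obtain ⟨rfl, hpf₂⟩ := ih₂ pf₂' rfl h5
          cases hpf₂
          exact ⟨rfl, HEq.rfl⟩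

end Aux

/-- Unambiguity: any balanced path from an entering state has a unique
proof in L_M: two proofs of items q₁ ⤳ q₂ (with whatever weights) inducing the same
path are equal, i.e. the map from proofs to their induced paths is injective. -/
theorem unambiguity {Q T A P K : Type*} [Semiring K] (src dst : T → Q)
    (lab : T → Option (A ⊕ (Bool × P))) (wt : T → K) (s : Q) (q₁ q₂ : Q) :
    Function.Injective
      (fun p : (Σ u : K, Pf src dst lab wt s q₁ q₂ u) => inducedPath p.2) := by
  rintro ⟨u, p⟩ ⟨v, p'⟩ h
  simp only at h
  obtain ⟨rfl, hpq⟩ := pf_unique src dst lab wt s p p' rfl h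
  exact Sigma.ext rfl hpq
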